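/- Let a ∈ ℂ. The Maclaurin coefficients C_n(1,a) of x ↦ (1 − e^{(a−1)x})/(1 − e^{−x}) satisfy C_0(1,a) = 1 − a and, for every n ≥ 1, the recurrence C_n(1,a) = −(a−1)^{n+1}/(n+1)! − Σ_{k=0}^{n−1} ((−1)^{n−k}/(n+1−k)!) C_k(1,a). -/

import Mathlib

open scoped BigOperators

/-- `x ↦ (1 - e^{(a-1)x})/(1 - e^{-x})`, with the removable singularity at `x = 0`
filled by its limiting value `1 - a`. -/
noncomputable def lerchF1 (a x : ℂ) : ℂ :=
  if x = 0 then 1 - a else (1 - Complex.exp ((a - 1) * x)) / (1 - Complex.exp (-x))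

/-- The `n`-th Maclaurin (Taylor at `0`) coefficient of `g`. -/
noncomputable def taylorCoeff (g : ℂ → ℂ) (n : ℕ) : ℂ :=
  iteratedDeriv n g 0 / (n.factorial : ℂ)

/-!
Near `0`, `f = lerchF1 a` is analytic: it is the quotient of the difference quotients at `0` of
`1 - e^{(a-1)x}` and of `1 - e^{-x}`, the latter being `1` at `0`. Moreover
`f(x) (1 - e^{-x}) = 1 - e^{(a-1)x}` near `0`. Comparing the `(n+1)`-st Taylor coefficients of both
sides by Leibniz' rule, and using that `1 - e^{-x}` has Taylor coefficient `0` in degree `0` and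
`(-1)^m / (m+1)!` in degree `m + 1` (so `1` in degree `1`), isolates `C_n(1,a)`.
-/

open Filter Topology Finset Complex Nat

lemma taylorCoeff_mul {f g : ℂ → ℂ} {n : ℕ} (hf : ContDiffAt ℂ n f 0)
    (hg : ContDiffAt ℂ n g 0) :
    taylorCoeff (f * g) n = ∑ k ∈ range (n + 1), taylorCoeff f k * taylorCoeff g (n - k) := by
  rw [taylorCoeff, iteratedDeriv_mul hf hg, sum_div]
  refine sum_congr rfl fun k hk => ?_
  rw [cast_choose ℂ (mem_range_succ_iff.mp hk), taylorCoeff, taylorCoeff]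
  have : (n ! : ℂ) ≠ 0 := cast_ne_zero.mpr n.factorial_ne_zero
  field_simp

lemma Filter.EventuallyEq.taylorCoeff_eq {f g : ℂ → ℂ} (h : f =ᶠ[𝓝 0] g) (n : ℕ) :
    taylorCoeff f n = taylorCoeff g n := by
  rw [taylorCoeff, taylorCoeff, h.iteratedDeriv_eq]

lemma taylorCoeff_one_sub_exp_mul_succ (w : ℂ) (n : ℕ) :
    taylorCoeff (fun x => 1 - exp (w * x)) (n + 1) = -w ^ (n + 1) / (n + 1)! := by
  rw [taylorCoeff, iteratedDeriv_const_sub n.succ_pos, iteratedDeriv_neg]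
  simp

lemma taylorCoeff_one_sub_exp_neg_zero : taylorCoeff (fun x => 1 - exp (-x)) 0 = 0 := by
  simp [taylorCoeff]

lemma taylorCoeff_one_sub_exp_neg_succ (n : ℕ) :
    taylorCoeff (fun x => 1 - exp (-x)) (n + 1) = (-1) ^ n / (n + 1)! := by
  simpa [pow_succ] using taylorCoeff_one_sub_exp_mul_succ (-1) n

lemma hasDerivAt_one_sub_exp_mul (w : ℂ) :
    HasDerivAt (fun x => 1 - exp (w * x)) (-w) 0 := by
  simpa using ((hasDerivAt_id (0 : ℂ)).const_mul w).cexp.const_sub 1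

lemma hasDerivAt_one_sub_exp_neg : HasDerivAt (fun x => 1 - exp (-x)) 1 0 := by
  simpa using hasDerivAt_one_sub_exp_mul (-1)

lemma AnalyticAt.dslope {𝕜 E : Type*} [NontriviallyNormedField 𝕜] [NormedAddCommGroup E]
    [NormedSpace 𝕜 E] {f : 𝕜 → E} {z : 𝕜} (hf : AnalyticAt 𝕜 f z) :
    AnalyticAt 𝕜 (dslope f z) z :=
  let ⟨_, hp⟩ := hf
  hp.has_fpower_series_dslope_fslope.analyticAt

lemma lerchF1_eq_dslope_div (a : ℂ) :
    lerchF1 a =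
      dslope (fun x => 1 - exp ((a - 1) * x)) 0 / dslope (fun x => 1 - exp (-x)) 0 := by
  funext x
  rcases eq_or_ne x 0 with rfl | hx
  · simp [lerchF1, dslope_same, (hasDerivAt_one_sub_exp_mul _).deriv,
      hasDerivAt_one_sub_exp_neg.deriv]
  · simp only [lerchF1, dslope_of_ne _ hx, slope, hx, if_false, Pi.div_apply, sub_zero, mul_zero,
      neg_zero, exp_zero, sub_self, vsub_eq_sub, smul_eq_mul]
    rw [mul_div_mul_left _ _ (inv_ne_zero hx)]

lemma analyticAt_lerchF1 (a : ℂ) : AnalyticAt ℂ (lerchF1 a) 0 := by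
  rw [lerchF1_eq_dslope_div]
  refine AnalyticAt.div (AnalyticAt.dslope (by fun_prop)) (AnalyticAt.dslope (by fun_prop)) ?_
  simp [dslope_same, hasDerivAt_one_sub_exp_neg.deriv]

lemma lerchF1_mul_one_sub_exp_neg (a : ℂ) :
    (lerchF1 a * fun x => 1 - exp (-x)) =ᶠ[𝓝 0] fun x => 1 - exp ((a - 1) * x) := by
  have hne : ∀ᶠ x in 𝓝[≠] (0 : ℂ), 1 - exp (-x) ≠ 0 := by
    simpa using hasDerivAt_one_sub_exp_neg.eventually_ne (c := 0) one_ne_zero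
  filter_upwards [eventually_nhdsWithin_iff.mp hne] with x hx
  rcases eq_or_ne x 0 with rfl | hx0
  · simp
  · simp [lerchF1, hx0, div_mul_cancel₀ _ (hx hx0)]

theorem stmt3 (a : ℂ) :
    taylorCoeff (lerchF1 a) 0 = 1 - a ∧
    ∀ n : ℕ, 1 ≤ n →
      taylorCoeff (lerchF1 a) n
        = -((a - 1) ^ (n + 1)) / ((n + 1).factorial : ℂ)
          - ∑ k ∈ Finset.range n,
              ((-1 : ℂ) ^ (n - k) / ((n + 1 - k).factorial : ℂ)) * taylorCoeff (lerchF1 a) k := by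
  refine ⟨by simp [taylorCoeff, lerchF1], fun n _ => ?_⟩
  have hD : AnalyticAt ℂ (fun x => 1 - exp (-x)) 0 := by fun_prop
  have hprod := (lerchF1_mul_one_sub_exp_neg a).taylorCoeff_eq (n + 1)
  rw [taylorCoeff_mul (analyticAt_lerchF1 a).contDiffAt hD.contDiffAt, sum_range_succ,
    sum_range_succ, Nat.sub_self, taylorCoeff_one_sub_exp_neg_zero, Nat.add_sub_cancel_left,
    taylorCoeff_one_sub_exp_neg_succ 0, taylorCoeff_one_sub_exp_mul_succ] at hprod
  have hsum : ∑ k ∈ range n,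
        taylorCoeff (lerchF1 a) k * taylorCoeff (fun x => 1 - exp (-x)) (n + 1 - k)
      = ∑ k ∈ range n, (-1) ^ (n - k) / (n + 1 - k)! * taylorCoeff (lerchF1 a) k := by
    refine sum_congr rfl fun k hk => ?_
    rw [Nat.sub_add_comm (mem_range.mp hk).le, taylorCoeff_one_sub_exp_neg_succ, mul_comm]
  rw [← hsum]
  linear_combination hprod
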